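/- In the Setup, let K : V → V denote the linear map acting on U_i as multiplication by q^{2i−d} for 0 ≤ i ≤ d (so A = R + K and A* = L + K⁻¹). Assume additionally: A and A* satisfy the cubic q-Serre relations; dim U_0 = 1; and the only subspaces of V invariant under each of R, L and K are 0 and V. Let W be a nonzero subspace of V with AW ⊆ W and A*W ⊆ W, such that the only subspaces W' ⊆ W with AW' ⊆ W' and A*W' ⊆ W' are 0 and W. Then V_0 ⊆ W, where V_0 is the eigenspace of A for the eigenvalue q^{−d}. -/

import Mathlib

noncomputable section

/-- `[n]_q = (qⁿ − q⁻ⁿ)/(q − q⁻¹)`. -/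
def qInt {K : Type*} [Field K] (q : K) (n : ℕ) : K :=
  (q ^ n - q⁻¹ ^ n) / (q - q⁻¹)

/-- `[n]_q! = [n]_q [n−1]_q ⋯ [1]_q`. -/
def qFac {K : Type*} [Field K] (q : K) (n : ℕ) : K :=
  ∏ k ∈ Finset.range n, qInt q (k + 1)

/-- `X, Y` satisfy the cubic `q`-Serre relations. -/
def QSerre {K V : Type*} [Field K] [AddCommGroup V] [Module K V]
    (q : K) (X Y : Module.End K V) : Prop :=
  X ^ 3 * Y - qInt q 3 • (X ^ 2 * Y * X) + qInt q 3 • (X * Y * X ^ 2) - Y * X ^ 3 = 0 ∧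
  Y ^ 3 * X - qInt q 3 • (Y ^ 2 * X * Y) + qInt q 3 • (Y * X * Y ^ 2) - X * Y ^ 3 = 0

/-- `U 0, …, U d` is a decomposition of `V` with diameter `d`: the `U i` with `i ≤ d` are nonzero,
`U i = 0` for `i > d`, and `V` is the (internal) direct sum of the `U i`. -/
def IsDecomposition {K V : Type*} [Field K] [AddCommGroup V] [Module K V]
    (d : ℕ) (U : ℕ → Submodule K V) : Prop :=
  (∀ i, i ≤ d → U i ≠ ⊥) ∧ (∀ i, d < i → U i = ⊥) ∧
  (⨆ i, U i) = ⊤ ∧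
  ∀ i, Disjoint (U i) (⨆ j, ⨆ _ : j ≠ i, U j)

/-- The Setup: `U 0, …, U d` is a decomposition of `V`; `R` is a raising map, `L` a lowering map,
and `A` (resp. `As`) acts on `U i` as `R + q^{2i−d}` (resp. `L + q^{d−2i}`). -/
def TDSetup {K V : Type*} [Field K] [AddCommGroup V] [Module K V]
    (q : K) (d : ℕ) (U : ℕ → Submodule K V) (R L A As : Module.End K V) : Prop :=
  IsDecomposition d U ∧
  (∀ i, Submodule.map R (U i) ≤ U (i + 1)) ∧
  (∀ i, Submodule.map L (U (i + 1)) ≤ U i) ∧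
  (∀ u ∈ U 0, L u = 0) ∧
  (∀ i, ∀ u ∈ U i, A u = R u + q ^ (2 * (i : ℤ) - d) • u) ∧
  (∀ i, ∀ u ∈ U i, As u = L u + q ^ ((d : ℤ) - 2 * (i : ℤ)) • u)

/-- `E i` is, for each `i`, the projection onto `P i` determined by the decomposition of `V` into
the subspaces `P j`: it is the identity on `P i` and zero on each `P j` with `j ≠ i`. -/
def IsProjFamily {K V : Type*} [Field K] [AddCommGroup V] [Module K V]
    (P : ℕ → Submodule K V) (E : ℕ → Module.End K V) : Prop :=
  ∀ i, (∀ v ∈ P i, E i v = v) ∧ ∀ j, j ≠ i → ∀ v ∈ P j, E i v = 0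

/-!
Write `θᵢ = q^{2i-d}` (`weight q d i`) and `Gₘ = Uₘ + Uₘ₊₁ + ⋯` (`tailSum U m`). The smallest
`K`-invariant subspace containing `W` is also invariant under `R` and `L`: `K` normalises both, and
`R = A - K`, `L = A* - K⁻¹` map `W` into it. Hence it is `V`, and since `G₁` is `K`-invariant and
misses `U₀`, `W ⊄ G₁`. Because `(A - θₘ) Gₘ ⊆ Gₘ₊₁` and the `θₘ` are distinct, every generalized
eigenspace of `A` other than the `θ₀` one lies in `G₁`, while the `θ₀` one meets `G₁` trivially and
so has dimension at most `dim U₀ = 1`. Decomposing `W` into generalized eigenspaces of `A` shows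
that it meets, hence contains, the generalized `θ₀`-eigenspace, which contains `V₀`.
-/

section Hull

variable {F V : Type*} [Field F] [AddCommGroup V] [Module F V]

def invariantHull (T : Module.End F V) (W : Submodule F V) : Submodule F V :=
  ⨆ n : ℕ, W.map (T ^ n)

variable {T f : Module.End F V} {W S : Submodule F V}

theorem le_invariantHull : W ≤ invariantHull T W := by
  have := le_iSup (fun n => W.map (T ^ n)) 0
  rwa [pow_zero, Module.End.one_eq_id, Submodule.map_id] at this

theorem map_invariantHull_le : (invariantHull T W).map T ≤ invariantHull T W := by
  rw [invariantHull, Submodule.map_iSup]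
  refine iSup_le fun n => ?_
  rw [← Submodule.map_comp, ← Module.End.mul_eq_comp, ← pow_succ']
  exact le_iSup (fun n => W.map (T ^ n)) (n + 1)

theorem Submodule.map_pow_le_of_map_le (hS : S.map T ≤ S) (n : ℕ) : S.map (T ^ n) ≤ S := by
  induction n with
  | zero => simp [Module.End.one_eq_id]
  | succ n ih =>
    rw [pow_succ', Module.End.mul_eq_comp, Submodule.map_comp]
    exact (Submodule.map_mono ih).trans hS

theorem invariantHull_le (hWS : W ≤ S) (hS : S.map T ≤ S) : invariantHull T W ≤ S :=
  iSup_le fun n => (Submodule.map_mono hWS).trans (Submodule.map_pow_le_of_map_le hS n)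

theorem pow_mul_eq_smul_of_mul_eq_smul {c : F} (h : T * f = c • (f * T)) (n : ℕ) :
    T ^ n * f = c ^ n • (f * T ^ n) := by
  induction n with
  | zero => simp
  | succ n ih =>
    rw [pow_succ', mul_assoc, ih, mul_smul_comm, ← mul_assoc, h, smul_mul_assoc, smul_smul,
      mul_assoc, ← pow_succ, ← pow_succ']

theorem map_invariantHull_le_of_mul_eq_smul {c : F} (hc : c ≠ 0) (h : T * f = c • (f * T))
    (hf : W.map f ≤ invariantHull T W) : (invariantHull T W).map f ≤ invariantHull T W := by
  rw [invariantHull, Submodule.map_iSup]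
  refine iSup_le fun n => ?_
  rintro _ ⟨_, ⟨w, hw, rfl⟩, rfl⟩
  have hcomm := congrArg (· w) (pow_mul_eq_smul_of_mul_eq_smul h n)
  simp only [Module.End.mul_apply, LinearMap.smul_apply] at hcomm
  have hfw : f ((T ^ n) w) = (c ^ n)⁻¹ • (T ^ n) (f w) := by
    rw [hcomm, smul_smul, inv_mul_cancel₀ (pow_ne_zero n hc), one_smul]
  rw [hfw]
  exact Submodule.smul_mem _ _ <| Submodule.map_pow_le_of_map_le map_invariantHull_le n
    (Submodule.mem_map_of_mem (hf (Submodule.mem_map_of_mem hw)))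

theorem Submodule.map_le_of_mul_eq_one [FiniteDimensional F V] {N : Module.End F V}
    (h : N * T = 1) (hS : S.map T ≤ S) : S.map N ≤ S := by
  have hmaps : Set.MapsTo T S S := fun x hx => hS (Submodule.mem_map_of_mem hx)
  have hinj : Function.Injective (T.restrict hmaps) := fun x y hxy => by
    have hTxy : T x = T y := congrArg Subtype.val hxy
    have := congrArg N hTxy
    rwa [← Module.End.mul_apply, ← Module.End.mul_apply, h, Module.End.one_apply,
      Module.End.one_apply, SetLike.coe_eq_coe] at this
  rintro _ ⟨x, hx, rfl⟩
  obtain ⟨y, hy⟩ := LinearMap.injective_iff_surjective.mp hinj ⟨x, hx⟩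
  have hyx : T y = x := congrArg Subtype.val hy
  rw [← hyx, ← Module.End.mul_apply, h, Module.End.one_apply]
  exact y.2

end Hull

section Eigenspaces

variable {F V : Type*} [Field F] [AddCommGroup V] [Module F V]

theorem Module.End.maxGenEigenspace_le_of_range_sub_le {f : Module.End F V}
    {S : Submodule F V} {θ μ : F} (hμ : μ ≠ θ) (hS : LinearMap.range (f - θ • 1) ≤ S) :
    f.maxGenEigenspace μ ≤ S := by
  have hstep : ∀ x, (f - μ • 1) x ∈ S → x ∈ S := fun x hx => by
    have hdiff : (f - μ • 1) x - (f - θ • 1) x = (θ - μ) • x := by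
      simp only [LinearMap.sub_apply, LinearMap.smul_apply, Module.End.one_apply, sub_smul]
      abel
    rw [← S.smul_mem_iff (sub_ne_zero.mpr hμ.symm), ← hdiff]
    exact S.sub_mem hx (hS (LinearMap.mem_range_self _ x))
  intro x hx
  obtain ⟨k, hk⟩ := (Module.End.mem_maxGenEigenspace f μ x).mp hx
  clear hx
  induction k generalizing x with
  | zero => simp only [pow_zero, Module.End.one_apply] at hk; simp [hk]
  | succ k ih =>
    rw [pow_succ, Module.End.mul_apply] at hk
    exact hstep x (ih hk)

theorem Module.End.maxGenEigenspace_inf_eq_bot_of_flag {f : Module.End F V}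
    {G : ℕ → Submodule F V} {θ : ℕ → F} {μ : F} {n : ℕ}
    (hG : ∀ m, (G m).map (f - θ m • 1) ≤ G (m + 1)) (hGn : G n = ⊥) :
    ∀ k m, m + k = n → (∀ i, m ≤ i → θ i ≠ μ) → f.maxGenEigenspace μ ⊓ G m = ⊥ := by
  intro k
  induction k with
  | zero => intro m hm _; rw [add_zero] at hm; rw [hm, hGn, inf_bot_eq]
  | succ k ih =>
    intro m hm hθ
    rw [eq_bot_iff]
    rintro v ⟨hvE, hvG⟩
    have hcomm : Commute f (f - θ m • 1) :=
      (Commute.refl f).sub_right ((Commute.one_right f).smul_right _)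
    have hnext : (f - θ m • 1) v ∈ f.maxGenEigenspace μ ⊓ G (m + 1) :=
      ⟨f.mapsTo_maxGenEigenspace_of_comm hcomm μ hvE, hG m (Submodule.mem_map_of_mem hvG)⟩
    rw [ih (m + 1) (by omega) (fun i hi => hθ i (by omega)), Submodule.mem_bot] at hnext
    have hv : v ∈ f.eigenspace (θ m) := by
      rw [Module.End.eigenspace_def]
      exact hnext
    exact (f.disjoint_genEigenspace (hθ m le_rfl) 1 ⊤).le_bot ⟨hv, hvE⟩

theorem Module.End.inf_maxGenEigenspace_ne_bot [IsAlgClosed F] [FiniteDimensional F V]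
    {f : Module.End F V} {W S : Submodule F V} {θ : F} (hW : ∀ x ∈ W, f x ∈ W)
    (hWS : ¬ W ≤ S) (hS : ∀ μ, μ ≠ θ → f.maxGenEigenspace μ ≤ S) :
    W ⊓ f.maxGenEigenspace θ ≠ ⊥ := by
  intro hbot
  apply hWS
  have hsplit : W = ⨆ μ, W ⊓ f.maxGenEigenspace μ := by
    rw [← Submodule.inf_iSup_genEigenspace hW ⊤, f.iSup_maxGenEigenspace_eq_top, inf_top_eq]
  rw [hsplit]
  refine iSup_le fun μ => ?_
  by_cases hμ : μ = θ
  · rw [hμ, hbot]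
    exact bot_le
  · exact inf_le_right.trans (hS μ hμ)

end Eigenspaces

section Finrank

variable {F V : Type*} [Field F] [AddCommGroup V] [Module F V] [FiniteDimensional F V]

theorem Submodule.finrank_le_of_disjoint_of_sup_eq_top {P S T : Submodule F V}
    (hPS : Disjoint P S) (hST : S ⊔ T = ⊤) : Module.finrank F P ≤ Module.finrank F T := by
  have hPS' := Submodule.finrank_sup_add_finrank_inf_eq P S
  have hST' := Submodule.finrank_sup_add_finrank_inf_eq S T
  rw [hPS.eq_bot, finrank_bot] at hPS'
  rw [hST, finrank_top] at hST'
  have := (P ⊔ S).finrank_le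
  omega

theorem Submodule.le_of_inf_ne_bot_of_finrank_le_one {P W : Submodule F V}
    (hP : Module.finrank F P ≤ 1) (hPW : P ⊓ W ≠ ⊥) : P ≤ W := by
  have hpos : 0 < Module.finrank F (P ⊓ W : Submodule F V) :=
    Nat.pos_of_ne_zero (mt Submodule.finrank_eq_zero.mp hPW)
  exact inf_eq_left.mp (Submodule.eq_of_le_of_finrank_le inf_le_left (by omega))

end Finrank

section Decomposition

variable {F V : Type*} [Field F] [AddCommGroup V] [Module F V] {U : ℕ → Submodule F V}

theorem LinearMap.ext_of_iSup_eq_top (hU : ⨆ i, U i = ⊤) {f g : Module.End F V}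
    (h : ∀ i, ∀ u ∈ U i, f u = g u) : f = g :=
  LinearMap.ext_on (s := ⋃ i, (U i : Set V)) (by rw [← Submodule.iSup_eq_span, hU])
    fun x hx => by
      obtain ⟨i, hi⟩ := Set.mem_iUnion.mp hx
      exact h i x hi

def tailSum (U : ℕ → Submodule F V) (m : ℕ) : Submodule F V :=
  ⨆ j, U (j + m)

theorem le_tailSum (j m : ℕ) : U (j + m) ≤ tailSum U m :=
  le_iSup (fun j => U (j + m)) j

theorem map_tailSum_le {f : Module.End F V} {S : Submodule F V} {m : ℕ}
    (h : ∀ j, (U (j + m)).map f ≤ S) : (tailSum U m).map f ≤ S := by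
  rw [tailSum, Submodule.map_iSup]
  exact iSup_le h

theorem map_tailSum_le_self {f : Module.End F V} {c : ℕ → F}
    (hf : ∀ i, ∀ u ∈ U i, f u = c i • u) (m : ℕ) : (tailSum U m).map f ≤ tailSum U m :=
  map_tailSum_le fun j => by
    rintro _ ⟨u, hu, rfl⟩
    rw [hf _ u hu]
    exact le_tailSum j m ((U (j + m)).smul_mem _ hu)

theorem tailSum_zero (hU : ⨆ i, U i = ⊤) : tailSum U 0 = ⊤ := by
  simpa [tailSum] using hU

theorem tailSum_eq_bot {d : ℕ} (hU : ∀ i, d < i → U i = ⊥) : tailSum U (d + 1) = ⊥ :=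
  iSup_eq_bot.mpr fun j => hU _ (by omega)

theorem tailSum_one_sup_eq_top (hU : ⨆ i, U i = ⊤) : tailSum U 1 ⊔ U 0 = ⊤ := by
  rw [eq_top_iff, ← hU]
  refine iSup_le fun i => ?_
  cases i with
  | zero => exact le_sup_right
  | succ j => exact le_sup_of_le_left (le_tailSum j 1)

theorem tailSum_one_le_iSup_ne_zero : tailSum U 1 ≤ ⨆ j, ⨆ _ : j ≠ 0, U j :=
  iSup_le fun j => le_iSup_of_le (j + 1) (le_iSup_of_le (Nat.succ_ne_zero j) le_rfl)

end Decomposition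

def weight {F : Type*} [Field F] (q : F) (d i : ℕ) : F :=
  q ^ (2 * (i : ℤ) - d)

section Weight

variable {F : Type*} [Field F] {q : F} {d : ℕ}

theorem weight_zero : weight q d 0 = q ^ (-(d : ℤ)) := by
  simp [weight]

theorem weight_add (hq : q ≠ 0) (i j : ℕ) : weight q d (i + j) = q ^ (2 * j) * weight q d i := by
  rw [weight, weight, ← zpow_natCast, ← zpow_add₀ hq]
  congr 1
  push_cast
  ring

theorem weight_ne_weight_zero (hq : q ≠ 0) (hq1 : ∀ n : ℕ, 0 < n → q ^ n ≠ 1) {i : ℕ}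
    (hi : 0 < i) : weight q d i ≠ weight q d 0 := by
  intro h
  rw [← zero_add i, weight_add hq] at h
  exact hq1 (2 * i) (by omega)
    (mul_right_cancel₀ (zpow_ne_zero _ hq : weight q d 0 ≠ 0) (h.trans (one_mul _).symm))

end Weight

namespace TDSetup

variable {F V : Type*} [Field F] [AddCommGroup V] [Module F V] {q : F} {d : ℕ}
  {U : ℕ → Submodule F V} {R L A As Kop : Module.End F V}

theorem eq_add (h : TDSetup q d U R L A As) (hK : ∀ i, ∀ u ∈ U i, Kop u = weight q d i • u) :
    A = R + Kop :=
  LinearMap.ext_of_iSup_eq_top h.1.2.2.1 fun i u hu => by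
    rw [h.2.2.2.2.1 i u hu, LinearMap.add_apply, hK i u hu, weight]

theorem sub_mul_eq_one (h : TDSetup q d U R L A As) (hq : q ≠ 0)
    (hK : ∀ i, ∀ u ∈ U i, Kop u = weight q d i • u) : (As - L) * Kop = 1 :=
  LinearMap.ext_of_iSup_eq_top h.1.2.2.1 fun i u hu => by
    have hsmul : weight q d i • u ∈ U i := (U i).smul_mem _ hu
    rw [Module.End.mul_apply, hK i u hu, LinearMap.sub_apply, h.2.2.2.2.2 i _ hsmul,
      add_sub_cancel_left, smul_smul, weight, ← zpow_add₀ hq, Module.End.one_apply]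
    simp

theorem mul_raising (h : TDSetup q d U R L A As) (hq : q ≠ 0)
    (hK : ∀ i, ∀ u ∈ U i, Kop u = weight q d i • u) : Kop * R = q ^ 2 • (R * Kop) :=
  LinearMap.ext_of_iSup_eq_top h.1.2.2.1 fun i u hu => by
    rw [Module.End.mul_apply, hK (i + 1) _ (h.2.1 i (Submodule.mem_map_of_mem hu)),
      LinearMap.smul_apply, Module.End.mul_apply, hK i u hu, map_smul, smul_smul,
      ← weight_add hq i 1]

theorem mul_lowering (h : TDSetup q d U R L A As) (hq : q ≠ 0)
    (hK : ∀ i, ∀ u ∈ U i, Kop u = weight q d i • u) : Kop * L = (q ^ 2)⁻¹ • (L * Kop) :=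
  LinearMap.ext_of_iSup_eq_top h.1.2.2.1 fun i u hu => by
    rw [Module.End.mul_apply, LinearMap.smul_apply, Module.End.mul_apply, hK i u hu, map_smul,
      smul_smul]
    cases i with
    | zero => rw [h.2.2.2.1 u hu, map_zero, smul_zero]
    | succ j =>
      rw [hK j _ (h.2.2.1 j (Submodule.mem_map_of_mem hu)), weight_add hq j 1, mul_one,
        inv_mul_cancel_left₀ (pow_ne_zero 2 hq)]

theorem map_sub_tailSum_le (h : TDSetup q d U R L A As) (m : ℕ) :
    (tailSum U m).map (A - weight q d m • 1) ≤ tailSum U (m + 1) :=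
  map_tailSum_le fun j => by
    rintro _ ⟨u, hu, rfl⟩
    have hAu : (A - weight q d m • 1) u = R u + (weight q d (j + m) - weight q d m) • u := by
      rw [LinearMap.sub_apply, show A u = R u + weight q d (j + m) • u from h.2.2.2.2.1 _ u hu,
        LinearMap.smul_apply, Module.End.one_apply, sub_smul]
      abel
    rw [hAu]
    refine Submodule.add_mem _ ?_ ?_
    · exact le_tailSum j (m + 1) (h.2.1 _ (Submodule.mem_map_of_mem hu))
    · cases j with
      | zero => rw [zero_add, sub_self, zero_smul]; exact Submodule.zero_mem _
      | succ j =>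
        rw [add_right_comm] at hu
        exact le_tailSum j (m + 1) ((U _).smul_mem _ hu)

theorem invariantHull_eq_top [FiniteDimensional F V] {W : Submodule F V}
    (h : TDSetup q d U R L A As) (hq : q ≠ 0)
    (hK : ∀ i, ∀ u ∈ U i, Kop u = weight q d i • u)
    (hBirr : ∀ W' : Submodule F V, W'.map R ≤ W' → W'.map L ≤ W' → W'.map Kop ≤ W' →
      W' = ⊥ ∨ W' = ⊤)
    (hW0 : W ≠ ⊥) (hWA : W.map A ≤ W) (hWAs : W.map As ≤ W) : invariantHull Kop W = ⊤ := by
  have hWZ : W ≤ invariantHull Kop W := le_invariantHull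
  have hZK : (invariantHull Kop W).map Kop ≤ invariantHull Kop W := map_invariantHull_le
  have hZR : (invariantHull Kop W).map R ≤ invariantHull Kop W := by
    refine map_invariantHull_le_of_mul_eq_smul (pow_ne_zero 2 hq) (h.mul_raising hq hK) ?_
    rintro _ ⟨w, hw, rfl⟩
    have hRw : R w = A w - Kop w := by rw [h.eq_add hK]; simp
    rw [hRw]
    exact Submodule.sub_mem _ (hWZ (hWA (Submodule.mem_map_of_mem hw)))
      (hZK (Submodule.mem_map_of_mem (hWZ hw)))
  have hZL : (invariantHull Kop W).map L ≤ invariantHull Kop W := by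
    refine map_invariantHull_le_of_mul_eq_smul (inv_ne_zero (pow_ne_zero 2 hq))
      (h.mul_lowering hq hK) ?_
    rintro _ ⟨w, hw, rfl⟩
    have hLw : L w = As w - (As - L) w := by simp
    rw [hLw]
    exact Submodule.sub_mem _ (hWZ (hWAs (Submodule.mem_map_of_mem hw)))
      (Submodule.map_le_of_mul_eq_one (h.sub_mul_eq_one hq hK) hZK
        (Submodule.mem_map_of_mem (hWZ hw)))
  exact (hBirr _ hZR hZL hZK).resolve_left (ne_bot_of_le_ne_bot hW0 hWZ)

theorem not_le_tailSum_one {W : Submodule F V} (h : TDSetup q d U R L A As)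
    (hK : ∀ i, ∀ u ∈ U i, Kop u = weight q d i • u) (hZ : invariantHull Kop W = ⊤) :
    ¬ W ≤ tailSum U 1 := by
  intro hWG
  have htop : tailSum U 1 = ⊤ := by
    rw [eq_top_iff, ← hZ]
    exact invariantHull_le hWG (map_tailSum_le_self hK 1)
  have hdisj : Disjoint (U 0) (tailSum U 1) :=
    (h.1.2.2.2 0).mono_right tailSum_one_le_iSup_ne_zero
  rw [htop, disjoint_top] at hdisj
  exact h.1.1 0 (Nat.zero_le d) hdisj

end TDSetup

theorem statement13_general {K : Type*} [Field K] [IsAlgClosed K]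
    (q : K) (hq : q ≠ 0) (hq1 : ∀ n : ℕ, 0 < n → q ^ n ≠ 1)
    {V : Type*} [AddCommGroup V] [Module K V] [FiniteDimensional K V]
    (d : ℕ) (U : ℕ → Submodule K V) (R L A As : Module.End K V)
    (hsetup : TDSetup q d U R L A As)
    (Kop : Module.End K V)
    (hK : ∀ i, ∀ u ∈ U i, Kop u = q ^ (2 * (i : ℤ) - d) • u)
    (hU0 : Module.finrank K (U 0) = 1)
    (hBirr : ∀ W' : Submodule K V, Submodule.map R W' ≤ W' → Submodule.map L W' ≤ W' →
      Submodule.map Kop W' ≤ W' → W' = ⊥ ∨ W' = ⊤)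
    (W : Submodule K V) (hW0 : W ≠ ⊥)
    (hWA : Submodule.map A W ≤ W) (hWAs : Submodule.map As W ≤ W) :
    Module.End.eigenspace A (q ^ (-(d : ℤ))) ≤ W := by
  obtain ⟨-, hUbot, hUtop, -⟩ := hsetup.1
  have hWG : ¬ W ≤ tailSum U 1 :=
    hsetup.not_le_tailSum_one hK (hsetup.invariantHull_eq_top hq hK hBirr hW0 hWA hWAs)
  have hrange : LinearMap.range (A - weight q d 0 • 1) ≤ tailSum U 1 := by
    rw [LinearMap.range_eq_map, ← tailSum_zero hUtop]
    exact hsetup.map_sub_tailSum_le 0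
  have hGen : A.maxGenEigenspace (weight q d 0) ⊓ tailSum U 1 = ⊥ :=
    Module.End.maxGenEigenspace_inf_eq_bot_of_flag hsetup.map_sub_tailSum_le
      (tailSum_eq_bot hUbot) d 1 (add_comm 1 d) fun i hi => weight_ne_weight_zero hq hq1 hi
  have hrank : Module.finrank K (A.maxGenEigenspace (weight q d 0)) ≤ 1 :=
    hU0 ▸ Submodule.finrank_le_of_disjoint_of_sup_eq_top (disjoint_iff.mpr hGen)
      (tailSum_one_sup_eq_top hUtop)
  have hmeet : W ⊓ A.maxGenEigenspace (weight q d 0) ≠ ⊥ :=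
    Module.End.inf_maxGenEigenspace_ne_bot (fun x hx => hWA (Submodule.mem_map_of_mem hx)) hWG
      fun μ hμ => Module.End.maxGenEigenspace_le_of_range_sub_le hμ hrange
  rw [← weight_zero]
  exact Module.End.eigenspace_le_maxGenEigenspace.trans
    (Submodule.le_of_inf_ne_bot_of_finrank_le_one hrank (by rwa [inf_comm]))

/-- Proposition 11.6: assume moreover that `A, A*` satisfy the cubic `q`-Serre
relations, `dim U₀ = 1`, and the only subspaces of `V` invariant under each of `R, L, K` are `0`
and `V`. If `W` is a nonzero `A, A*`-invariant irreducible subspace of `V`, then `W` contains the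
eigenspace `V₀` of `A` for the eigenvalue `q^{−d}`. -/
theorem statement13 {K : Type*} [Field K] [IsAlgClosed K] [CharZero K]
    (q : K) (hq : q ≠ 0) (hq1 : ∀ n : ℕ, 0 < n → q ^ n ≠ 1)
    {V : Type*} [AddCommGroup V] [Module K V] [FiniteDimensional K V]
    (d : ℕ) (U : ℕ → Submodule K V) (R L A As : Module.End K V)
    (hsetup : TDSetup q d U R L A As)
    (Kop : Module.End K V)
    (hK : ∀ i, ∀ u ∈ U i, Kop u = q ^ (2 * (i : ℤ) - d) • u)
    (hserre : QSerre q A As)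
    (hU0 : Module.finrank K (U 0) = 1)
    (hBirr : ∀ W' : Submodule K V, Submodule.map R W' ≤ W' → Submodule.map L W' ≤ W' →
      Submodule.map Kop W' ≤ W' → W' = ⊥ ∨ W' = ⊤)
    (W : Submodule K V) (hW0 : W ≠ ⊥)
    (hWA : Submodule.map A W ≤ W) (hWAs : Submodule.map As W ≤ W)
    (hWirr : ∀ W' : Submodule K V, W' ≤ W → Submodule.map A W' ≤ W' →
      Submodule.map As W' ≤ W' → W' = ⊥ ∨ W' = W) :
    Module.End.eigenspace A (q ^ (-(d : ℤ))) ≤ W :=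
  statement13_general q hq hq1 d U R L A As hsetup Kop hK hU0 hBirr W hW0 hWA hWAs
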